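/- arXiv:2002.06043 — 2 statements merged into one kernel-verified Lean document; each statement's English description precedes it below -/
import Mathlib

section
/- For sampling without replacement, the probability of an unordered sample satisfies the recursion p(S^k) = ∑_{s∈S^k} p(s) · p^{D\{s}}(S^k \ {s}). -/
open Finset MeasureTheory

variable {α : Type*}

/-- Probability of drawing the ordered sample `B` sequentially without replacement
from (unnormalized) weights `p`, when `t` is the total remaining probability mass. -/
noncomputable def ordProb (p : α → ℝ) : ℝ → List α → ℝ
  | _, [] => 1
  | t, b :: L => (p b / t) * ordProb p (t - p b) L

/-- Probability of drawing the unordered sample `S` without replacement: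
sum of `ordProb` over all orderings of `S`. -/
noncomputable def setProb (p : α → ℝ) (t : ℝ) (S : Finset α) : ℝ :=
  (S.toList.permutations.map (ordProb p t)).sum

/-!
Splitting the orderings of `S` according to their first element `s`, the remaining part of an
ordering runs over the orderings of `S.erase s`, and by the recursive definition of `ordProb` its
probability is `p s / t` times that of the remainder drawn from the remaining mass `t - p s`.
-/

namespace List

variable [DecidableEq α] {l : List α}

theorem nodup_flatMap_map_cons_permutations_erase (hl : l.Nodup) :
    (l.flatMap fun a => (l.erase a).permutations.map (a :: ·)).Nodup := by
  refine nodup_flatMap.2 ⟨fun a _ => (nodup_permutations _ (hl.erase a)).map cons_injective, ?_⟩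
  refine hl.imp fun hab L hLa hLb => hab ?_
  obtain ⟨_, -, rfl⟩ := mem_map.1 hLa
  obtain ⟨_, -, h⟩ := mem_map.1 hLb
  exact (cons_eq_cons.1 h).1.symm

theorem permutations_perm_flatMap_erase (hl : l.Nodup) (hne : l ≠ []) :
    l.permutations ~ l.flatMap fun a => (l.erase a).permutations.map (a :: ·) := by
  refine (perm_ext_iff_of_nodup (nodup_permutations _ hl)
    (nodup_flatMap_map_cons_permutations_erase hl)).2 fun L => ?_
  cases L with
  | nil => simpa [mem_permutations] using hne
  | cons b L => simp [mem_permutations, cons_perm_iff_perm_erase]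

theorem sum_map_permutations_eq_sum_erase {M : Type*} [AddCommMonoid M] (f : List α → M)
    (hl : l.Nodup) (hne : l ≠ []) :
    (l.permutations.map f).sum =
      (l.map fun a => ((l.erase a).permutations.map fun L => f (a :: L)).sum).sum := by
  rw [((permutations_perm_flatMap_erase hl hne).map f).sum_eq, flatMap, map_flatten, sum_flatten]
  simp [Function.comp_def]

end List

theorem setProb_eq_of_perm (p : α → ℝ) (t : ℝ) {S : Finset α} {l : List α} (h : l.Perm S.toList) :
    setProb p t S = (l.permutations.map (ordProb p t)).sum :=
  ((h.permutations.map _).sum_eq).symm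

theorem setProb_eq_sum_erase [DecidableEq α] (p : α → ℝ) (t : ℝ) {S : Finset α}
    (hS : S.Nonempty) :
    setProb p t S = ∑ s ∈ S, p s / t * setProb p (t - p s) (S.erase s) := by
  have herase (s : α) : (S.toList.erase s).Perm (S.erase s).toList := by
    rw [← Multiset.coe_eq_coe, ← Multiset.coe_erase, Finset.coe_toList, Finset.coe_toList,
      Finset.erase_val]
  rw [setProb, List.sum_map_permutations_eq_sum_erase _ S.nodup_toList (by simpa using hS.ne_empty),
    ← Finset.sum_map_toList]
  congr 1
  refine List.map_congr_left fun s _ => ?_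
  simp only [ordProb, List.sum_map_mul_left, setProb_eq_of_perm p (t - p s) (herase s)]

theorem setProb_recursion_general [DecidableEq α] (S : Finset α)
    (k : ℕ) (hk1 : 1 ≤ k) (hcard : S.card = k) (p : α → ℝ) :
    setProb p 1 S = ∑ s ∈ S, p s * setProb p (1 - p s) (S.erase s) := by
  simpa only [div_one] using setProb_eq_sum_erase p 1 (Finset.card_pos.1 (hcard ▸ hk1))

theorem setProb_recursion [DecidableEq α] (D S : Finset α) (hS : S ⊆ D)
    (k : ℕ) (hk1 : 1 ≤ k) (hcard : S.card = k) (hk : k ≤ D.card)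
    (p : α → ℝ) (hp : ∀ x ∈ D, 0 < p x) (hsum : ∑ x ∈ D, p x = 1) :
    setProb p 1 S = ∑ s ∈ S, p s * setProb p (1 - p s) (S.erase s) :=
  setProb_recursion_general S k hk1 hcard p
end

section
/- For any s ∈ S^k: p(s) + (1 - ∑_{s'∈S^k} p(s')) · P(b_k = s | S^k) = p(s) · R(S^k, s), where P(b_k = s | S^k) is the conditional probability that s is the last element sampled and R(S^k,s) = p^{D\{s}}(S^k\{s})/p(S^k) is the leave-one-out ratio. -/
open Finset MeasureTheory

variable {α : Type*}

/-!
Write `S = insert s T`: the orderings of `S` are the insertions of `s` into the orderings `L`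
of `T`. Drawing `L` from the population without `s` amounts, in the full population, to drawing
`s` before the last element of `L`, or drawing `L` first, i.e. `L` followed by `s` or by something
else. This gives, by induction on `L`,
`∑ (insertions of s into L) + (t - p S) / (t - p T) * ordProb p t L = ordProb p (t - p s) L`.
Summing over `L` yields
`setProb p 1 S + (1 - p S) / (1 - p T) * setProb p 1 T = setProb p (1 - p s) T`,
which is the claim after multiplying by `p s / setProb p 1 S`.
-/

section

variable (p : α → ℝ)

lemma sum_map_nonneg_of_nonneg {L : List α} (hp : ∀ x ∈ L, 0 ≤ p x) : 0 ≤ (L.map p).sum :=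
  List.sum_nonneg (List.forall_mem_map.2 hp)

lemma ordProb_pos : ∀ (L : List α) (t : ℝ),
    (∀ x ∈ L, 0 < p x) → (L.map p).sum < t → 0 < ordProb p t L
  | [], _, _, _ => one_pos
  | b :: L, t, hp, hlt => by
    simp only [List.forall_mem_cons, List.map_cons, List.sum_cons] at hp hlt
    have hL := sum_map_nonneg_of_nonneg p fun x hx => (hp.2 x hx).le
    have ht : 0 < t := by linarith [hp.1]
    exact mul_pos (div_pos hp.1 ht) (ordProb_pos L (t - p b) hp.2 (by linarith))

lemma sum_ordProb_permutations'Aux_add (s : α) : ∀ (L : List α) (t : ℝ),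
    (∀ x ∈ s :: L, 0 ≤ p x) → ((s :: L).map p).sum < t →
    ((List.permutations'Aux s L).map (ordProb p t)).sum
        + (t - p s - (L.map p).sum) / (t - (L.map p).sum) * ordProb p t L
      = ordProb p (t - p s) L
  | [], t, hp, hlt => by
    simp only [List.map_cons, List.map_nil, List.sum_cons, List.sum_nil] at hlt
    have ht : t ≠ 0 := by linarith [hp s List.mem_cons_self]
    simp only [List.permutations'Aux, ordProb, List.map_cons, List.map_nil, List.sum_cons,
      List.sum_nil]
    field_simp
    ring
  | b :: L, t, hp, hlt => by
    have IH := sum_ordProb_permutations'Aux_add s L (t - p b)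
      (fun x hx => hp x (by simp only [List.mem_cons] at hx ⊢; tauto))
      (by simp only [List.map_cons, List.sum_cons] at hlt ⊢; linarith)
    simp only [List.forall_mem_cons] at hp
    simp only [List.map_cons, List.sum_cons] at hlt
    have hL := sum_map_nonneg_of_nonneg p hp.2.2
    have ht : t ≠ 0 := by linarith
    have hts : t - p s ≠ 0 := by linarith
    have htb : t - p b - (L.map p).sum ≠ 0 := by linarith
    rw [sub_right_comm t (p b) (p s)] at IH
    simp only [List.permutations'Aux, List.map_cons, List.map_map, List.sum_cons, ordProb,
      Function.comp_def, List.sum_map_mul_left]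
    rw [← IH, ← sub_sub t (p b)]
    field_simp
    ring

lemma setProb_eq_sum_permutations' (t : ℝ) (S : Finset α) :
    setProb p t S = (S.toList.permutations'.map (ordProb p t)).sum :=
  ((List.permutations_perm_permutations' S.toList).map (ordProb p t)).sum_eq

lemma setProb_pos (t : ℝ) (S : Finset α) (hp : ∀ x ∈ S, 0 < p x) (hlt : ∑ x ∈ S, p x < t) :
    0 < setProb p t S := by
  refine List.sum_pos _ ?_
    (List.ne_nil_of_mem (List.mem_map_of_mem (List.mem_permutations.2 (List.Perm.refl _))))
  simp only [List.mem_map, List.mem_permutations, forall_exists_index, and_imp]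
  rintro _ L hL rfl
  refine ordProb_pos p L t (fun x hx => hp x (Finset.mem_toList.1 (hL.subset hx))) ?_
  rwa [(hL.map p).sum_eq, Finset.sum_map_toList]

lemma setProb_insert_add [DecidableEq α] (t : ℝ) {s : α} {T : Finset α} (hsT : s ∉ T)
    (hp : ∀ x ∈ insert s T, 0 ≤ p x) (hlt : ∑ x ∈ insert s T, p x < t) :
    setProb p t (insert s T) + (t - p s - ∑ x ∈ T, p x) / (t - ∑ x ∈ T, p x) * setProb p t T
      = setProb p (t - p s) T := by
  rw [setProb_eq_sum_permutations', ((Finset.toList_insert hsT).permutations'.map _).sum_eq,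
    setProb_eq_sum_permutations', setProb_eq_sum_permutations', List.permutations',
    List.map_flatMap, List.flatMap_def, List.sum_flatten, List.map_map,
    ← List.sum_map_mul_left, ← List.sum_map_add]
  refine congrArg List.sum (List.map_congr_left fun L hL => ?_)
  have hL : L.Perm T.toList := List.mem_permutations'.1 hL
  have hsum : (L.map p).sum = ∑ x ∈ T, p x := by rw [(hL.map p).sum_eq, Finset.sum_map_toList]
  rw [Finset.sum_insert hsT] at hlt
  rw [← hsum]
  refine sum_ordProb_permutations'Aux_add p s L t (fun x hx => hp x ?_) (by simpa [hsum] using hlt)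
  simpa using (List.mem_cons.1 hx).imp id (fun h => Finset.mem_toList.1 (hL.subset h))

end

theorem last_sample_leave_one_out_general [DecidableEq α] (D S : Finset α) (hS : S ⊆ D)
    (s : α) (hs : s ∈ S) (p : α → ℝ) (hp : ∀ x ∈ D, 0 < p x)
    (hmass : ∑ s' ∈ S, p s' < 1) :
    p s + (1 - ∑ s' ∈ S, p s') *
        ((setProb p 1 (S.erase s) / setProb p 1 S) * (p s / (1 - ∑ s' ∈ S.erase s, p s')))
      = p s * (setProb p (1 - p s) (S.erase s) / setProb p 1 S) := by
  have hpS : ∀ x ∈ S, 0 < p x := fun x hx => hp x (hS hx)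
  have hS_pos : 0 < setProb p 1 S := setProb_pos p 1 S hpS hmass
  have hsum_erase : ∑ x ∈ S.erase s, p x = ∑ x ∈ S, p x - p s := by
    rw [← Finset.add_sum_erase S p hs]; ring
  have hden : 1 - (∑ x ∈ S, p x - p s) ≠ 0 := by linarith [hpS s hs]
  have hins : insert s (S.erase s) = S := Finset.insert_erase hs
  have key := setProb_insert_add p 1 (Finset.notMem_erase s S)
    (fun x hx => (hpS x (by rwa [hins] at hx)).le) (by rwa [hins])
  rw [hins, hsum_erase] at key
  rw [← key, hsum_erase]
  field_simp
  ring

theorem last_sample_leave_one_out [DecidableEq α] (D S : Finset α) (hS : S ⊆ D)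
    (s : α) (hs : s ∈ S) (p : α → ℝ) (hp : ∀ x ∈ D, 0 < p x)
    (hsum : ∑ x ∈ D, p x = 1) (hmass : ∑ s' ∈ S, p s' < 1) :
    p s + (1 - ∑ s' ∈ S, p s') *
        ((setProb p 1 (S.erase s) / setProb p 1 S) * (p s / (1 - ∑ s' ∈ S.erase s, p s')))
      = p s * (setProb p (1 - p s) (S.erase s) / setProb p 1 S) :=
  last_sample_leave_one_out_general D S hS s hs p hp hmass
end
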